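/- For each integer n ≥ 2, let μ_n be the measure on ℝ with density p_n(x) = (1/(2π)) · √(4n² − 4n − n²x²)/(n − x²) for |x| < 2√(1 − 1/n) and 0 elsewhere. Then each μ_n is a probability measure, and μ_n converges weakly to the semicircle law as n → ∞ (i.e., ∫ f dμ_n → ∫ f dμ_sc for every bounded continuous f : ℝ → ℝ). -/

import Mathlib

open MeasureTheory Filter Topology
open scoped ENNReal

noncomputable section

/-- The semicircle law: density `x ↦ (1/(2π))√(4−x²)` on `[−2,2]`, `0` elsewhere. -/
def semicircleLaw : Measure ℝ :=
  volume.withDensity fun x => ENNReal.ofReal (Real.sqrt (4 - x ^ 2) / (2 * Real.pi))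

/-!
With `a = 2√(1 - 1/N)`, `c = √N` and `b = (N - 2)/√N` one has `a² + b² = c²`, and the density of
`μ_N` is `N/(2π) · √(a² - x²)/(c² - x²)` on all of `ℝ` (the square root vanishes off `(-a, a)`).
For `a² + b² = c²` the function `arcsin (x/a) - (b/c) · arcsin (b x / (a √(c² - x²)))` is a
primitive of `√(a² - x²)/(c² - x²)` on `(-a, a)` which is odd and equals `π/2 · (1 - b/c)` at `a`,
so the total mass is `N/(2π) · π (1 - (N - 2)/N) = 1`. As `N → ∞` these densities converge
pointwise to the semicircle density, and for `N ≥ 6` they are bounded by three times it, so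
dominated convergence gives `∫ f dμ_N → ∫ f dμ_sc` for every bounded continuous `f`.
-/

open Set Real

section Primitive

variable {a b c x : ℝ}

lemma hasDerivAt_arcsin_div (ha : 0 < a) (hx : x ∈ Ioo (-a) a) :
    HasDerivAt (fun y => arcsin (y / a)) (1 / √(a ^ 2 - x ^ 2)) x := by
  have hlt : x / a < 1 := (div_lt_one ha).2 hx.2
  have hgt : -1 < x / a := (lt_div_iff₀ ha).2 (by linarith [hx.1])
  have hsqrt : √(1 - (x / a) ^ 2) = √(a ^ 2 - x ^ 2) / a := by
    rw [show 1 - (x / a) ^ 2 = (a ^ 2 - x ^ 2) / a ^ 2 by field_simp,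
      Real.sqrt_div' _ (sq_nonneg a), Real.sqrt_sq ha.le]
  have h := (hasDerivAt_arcsin hgt.ne' hlt.ne).comp x ((hasDerivAt_id x).div_const a)
  refine h.congr_deriv ?_
  rw [hsqrt]
  field_simp

lemma hasDerivAt_div_sqrt_sq_sub_sq (hx : x ^ 2 < c ^ 2) :
    HasDerivAt (fun y => y / √(c ^ 2 - y ^ 2))
      (c ^ 2 / ((c ^ 2 - x ^ 2) * √(c ^ 2 - x ^ 2))) x := by
  have hpos : 0 < c ^ 2 - x ^ 2 := by linarith
  have hs : 0 < √(c ^ 2 - x ^ 2) := Real.sqrt_pos.2 hpos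
  have hsq := Real.sq_sqrt hpos.le
  have hden : HasDerivAt (fun y => √(c ^ 2 - y ^ 2)) (-x / √(c ^ 2 - x ^ 2)) x := by
    refine (((hasDerivAt_pow 2 x).const_sub (c ^ 2)).sqrt hpos.ne').congr_deriv ?_
    field_simp
    ring
  refine ((hasDerivAt_id' x).div hden hs.ne').congr_deriv ?_
  field_simp
  rw [hsq]
  ring

lemma hasDerivAt_arcsin_mul_div_sqrt (ha : 0 < a) (hc : 0 < c) (habc : a ^ 2 + b ^ 2 = c ^ 2)
    (hx : x ^ 2 < a ^ 2) :
    HasDerivAt (fun y => arcsin (b / a * (y / √(c ^ 2 - y ^ 2))))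
      (b * c / ((c ^ 2 - x ^ 2) * √(a ^ 2 - x ^ 2))) x := by
  have hax : 0 < a ^ 2 - x ^ 2 := by linarith
  have hcx : 0 < c ^ 2 - x ^ 2 := by nlinarith
  set v := b / a * (x / √(c ^ 2 - x ^ 2))
  have hv : 1 - v ^ 2 = (c * √(a ^ 2 - x ^ 2) / (a * √(c ^ 2 - x ^ 2))) ^ 2 := by
    simp only [v, mul_pow, div_pow, Real.sq_sqrt hax.le, Real.sq_sqrt hcx.le]
    field_simp
    linear_combination (-x ^ 2) * habc
  have hsqrt : √(1 - v ^ 2) = c * √(a ^ 2 - x ^ 2) / (a * √(c ^ 2 - x ^ 2)) := by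
    rw [hv, Real.sqrt_sq (by positivity)]
  have hv1 : v ^ 2 < 1 := by
    have : 0 < 1 - v ^ 2 := by rw [hv]; positivity
    linarith
  have hne : v ≠ -1 ∧ v ≠ 1 := by
    constructor <;> rintro h <;> rw [h] at hv1 <;> norm_num at hv1
  refine ((hasDerivAt_arcsin hne.1 hne.2).comp x
    ((hasDerivAt_div_sqrt_sq_sub_sq (by nlinarith)).const_mul (b / a))).congr_deriv ?_
  rw [hsqrt]
  have := Real.sqrt_pos.2 hax
  have := Real.sqrt_pos.2 hcx
  field_simp

def arcsinPrimitive (a b c x : ℝ) : ℝ :=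
  arcsin (x / a) - b / c * arcsin (b / a * (x / √(c ^ 2 - x ^ 2)))

lemma hasDerivAt_arcsinPrimitive (ha : 0 < a) (hc : 0 < c) (habc : a ^ 2 + b ^ 2 = c ^ 2)
    (hx : x ∈ Ioo (-a) a) :
    HasDerivAt (arcsinPrimitive a b c) (√(a ^ 2 - x ^ 2) / (c ^ 2 - x ^ 2)) x := by
  have hx2 : x ^ 2 < a ^ 2 := sq_lt_sq' hx.1 hx.2
  have hax : 0 < a ^ 2 - x ^ 2 := by linarith
  have hcx : 0 < c ^ 2 - x ^ 2 := by nlinarith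
  refine ((hasDerivAt_arcsin_div ha hx).sub
    ((hasDerivAt_arcsin_mul_div_sqrt ha hc habc hx2).const_mul (b / c))).congr_deriv ?_
  have := Real.sqrt_pos.2 hax
  field_simp
  linear_combination (-1 : ℝ) * habc - Real.sq_sqrt hax.le

lemma continuousOn_arcsinPrimitive (habc : a ^ 2 + b ^ 2 = c ^ 2) :
    ContinuousOn (arcsinPrimitive a b c) (Icc (-a) a) := by
  rcases eq_or_ne b 0 with rfl | hb
  · have : arcsinPrimitive a 0 c = fun x => arcsin (x / a) := by
      funext x
      simp [arcsinPrimitive]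
    rw [this]
    fun_prop
  · have hsqrt : ∀ x ∈ Icc (-a) a, √(c ^ 2 - x ^ 2) ≠ 0 := fun x hx => by
      have := sq_le_sq' hx.1 hx.2
      have : 0 < b ^ 2 := by positivity
      exact (Real.sqrt_pos.2 (by linarith)).ne'
    unfold arcsinPrimitive
    fun_prop (disch := assumption)

lemma arcsinPrimitive_neg (x : ℝ) : arcsinPrimitive a b c (-x) = -arcsinPrimitive a b c x := by
  simp only [arcsinPrimitive, neg_div, neg_sq, mul_neg, arcsin_neg]
  ring

lemma arcsinPrimitive_self (ha : 0 < a) (hb : 0 ≤ b) (habc : a ^ 2 + b ^ 2 = c ^ 2) :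
    arcsinPrimitive a b c a = π / 2 * (1 - b / c) := by
  have hcb : √(c ^ 2 - a ^ 2) = b := by rw [← habc, add_sub_cancel_left, Real.sqrt_sq hb]
  rcases hb.eq_or_lt with rfl | hb
  · simp [arcsinPrimitive, div_self ha.ne']
  · rw [arcsinPrimitive, hcb, div_self ha.ne', arcsin_one,
      div_mul_div_cancel₀ ha.ne', div_self hb.ne', arcsin_one]
    ring

lemma sqrt_sq_sub_sq_div_nonneg {C : ℝ} (h : a ^ 2 ≤ C) (x : ℝ) :
    0 ≤ √(a ^ 2 - x ^ 2) / (C - x ^ 2) := by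
  rcases lt_or_ge (x ^ 2) (a ^ 2) with hx | hx
  · exact div_nonneg (Real.sqrt_nonneg _) (by linarith)
  · rw [Real.sqrt_eq_zero_of_nonpos (by linarith), zero_div]

lemma sqrt_sq_sub_sq_eq_zero_of_notMem_Ioc (ha : 0 ≤ a) (hx : x ∉ Ioc (-a) a) :
    √(a ^ 2 - x ^ 2) = 0 := by
  rw [mem_Ioc, not_and_or, not_lt, not_le] at hx
  apply Real.sqrt_eq_zero_of_nonpos
  rcases hx with hx | hx <;> nlinarith

lemma integrable_sqrt_sq_sub_sq_div (ha : 0 < a) (hc : 0 < c) (habc : a ^ 2 + b ^ 2 = c ^ 2) :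
    Integrable (fun x => √(a ^ 2 - x ^ 2) / (c ^ 2 - x ^ 2)) := by
  have hac : a ^ 2 ≤ c ^ 2 := by nlinarith [sq_nonneg b]
  refine (intervalIntegral.integrableOn_deriv_of_nonneg (continuousOn_arcsinPrimitive habc)
    (fun x hx => hasDerivAt_arcsinPrimitive ha hc habc hx)
    (fun x _ => sqrt_sq_sub_sq_div_nonneg hac x)).integrable_of_forall_notMem_eq_zero
    fun x hx => ?_
  rw [sqrt_sq_sub_sq_eq_zero_of_notMem_Ioc ha.le hx, zero_div]

theorem integral_sqrt_sq_sub_sq_div (ha : 0 < a) (hb : 0 ≤ b) (hc : 0 < c)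
    (habc : a ^ 2 + b ^ 2 = c ^ 2) :
    ∫ x, √(a ^ 2 - x ^ 2) / (c ^ 2 - x ^ 2) = π * (1 - b / c) := by
  rw [← setIntegral_eq_integral_of_forall_compl_eq_zero (s := Ioc (-a) a) fun x hx => by
      rw [sqrt_sq_sub_sq_eq_zero_of_notMem_Ioc ha.le hx, zero_div],
    ← intervalIntegral.integral_of_le (by linarith),
    intervalIntegral.integral_eq_sub_of_hasDerivAt_of_le (by linarith)
      (continuousOn_arcsinPrimitive habc) (fun x hx => hasDerivAt_arcsinPrimitive ha hc habc hx)
      (integrable_sqrt_sq_sub_sq_div ha hc habc).intervalIntegrable,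
    arcsinPrimitive_neg, arcsinPrimitive_self ha hb habc]
  ring

end Primitive

section WithDensity

variable {α E : Type*} [MeasurableSpace α] {μ : Measure α} [NormedAddCommGroup E] [NormedSpace ℝ E]
  {f : α → ℝ}

lemma integral_withDensity_ofReal (hf : AEMeasurable f μ) (hf_nonneg : 0 ≤ᵐ[μ] f) (g : α → E) :
    ∫ x, g x ∂μ.withDensity (fun x => ENNReal.ofReal (f x)) = ∫ x, f x • g x ∂μ := by
  rw [integral_withDensity_eq_integral_toReal_smul₀ hf.ennreal_ofReal
    (ae_of_all _ fun _ => ENNReal.ofReal_lt_top)]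
  refine integral_congr_ae ?_
  filter_upwards [hf_nonneg] with x hx
  rw [ENNReal.toReal_ofReal hx]

lemma isProbabilityMeasure_withDensity_ofReal (hf : Integrable f μ) (hf_nonneg : 0 ≤ᵐ[μ] f)
    (hf_one : ∫ x, f x ∂μ = 1) :
    IsProbabilityMeasure (μ.withDensity fun x => ENNReal.ofReal (f x)) := by
  constructor
  rw [withDensity_apply _ MeasurableSet.univ, Measure.restrict_univ,
    ← ofReal_integral_eq_lintegral_ofReal hf hf_nonneg, hf_one, ENNReal.ofReal_one]

end WithDensity

def halfWidth (N : ℝ) : ℝ := 2 * √(1 - 1 / N)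

def binaryDensity (N x : ℝ) : ℝ :=
  if |x| < halfWidth N then
    (1 / (2 * π)) * √(4 * N ^ 2 - 4 * N - N ^ 2 * x ^ 2) / (N - x ^ 2)
  else 0

def semicircleDensity (x : ℝ) : ℝ := √(4 - x ^ 2) / (2 * π)

section BinaryDensity

variable {N : ℝ}

lemma halfWidth_sq (hN : 1 ≤ N) : halfWidth N ^ 2 = 4 - 4 / N := by
  have : 1 / N ≤ 1 := (div_le_one (by linarith)).2 hN
  rw [halfWidth, mul_pow, Real.sq_sqrt (by linarith)]
  ring

lemma halfWidth_pos (hN : 1 < N) : 0 < halfWidth N := by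
  have : 1 / N < 1 := (div_lt_one (by linarith)).2 hN
  unfold halfWidth
  have := Real.sqrt_pos.2 (sub_pos.2 this)
  positivity

lemma halfWidth_sq_le (hN : 1 ≤ N) : halfWidth N ^ 2 ≤ N := by
  rw [halfWidth_sq hN, sub_le_iff_le_add, ← sub_le_iff_le_add', le_div_iff₀ (by linarith)]
  nlinarith [sq_nonneg (N - 2)]

lemma halfWidth_sq_add_sq (hN : 1 ≤ N) : halfWidth N ^ 2 + ((N - 2) / √N) ^ 2 = √N ^ 2 := by
  have hN0 : 0 < N := by linarith
  rw [halfWidth_sq hN, div_pow, Real.sq_sqrt hN0.le]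
  field_simp
  ring

lemma tendsto_halfWidth : Tendsto (fun n : ℕ => halfWidth n) atTop (𝓝 2) := by
  have h := ((tendsto_one_div_atTop_nhds_zero_nat (𝕜 := ℝ)).const_sub 1).sqrt.const_mul 2
  simpa [halfWidth] using h

lemma binaryDensity_eq (hN : 1 ≤ N) (x : ℝ) :
    binaryDensity N x = N / (2 * π) * (√(halfWidth N ^ 2 - x ^ 2) / (N - x ^ 2)) := by
  have hN0 : 0 < N := by linarith
  unfold binaryDensity
  split_ifs with hx
  · have hQ : 4 * N ^ 2 - 4 * N - N ^ 2 * x ^ 2 = N ^ 2 * (halfWidth N ^ 2 - x ^ 2) := by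
      rw [halfWidth_sq hN]
      field_simp
    rw [hQ, Real.sqrt_mul (sq_nonneg N), Real.sqrt_sq hN0.le]
    ring
  · have : halfWidth N ^ 2 ≤ x ^ 2 := by
      rw [← sq_abs x]
      exact pow_le_pow_left₀ (by unfold halfWidth; positivity) (not_lt.1 hx) 2
    rw [Real.sqrt_eq_zero_of_nonpos (by linarith)]
    simp

lemma binaryDensity_nonneg (hN : 1 ≤ N) (x : ℝ) : 0 ≤ binaryDensity N x := by
  rw [binaryDensity_eq hN]
  exact mul_nonneg (div_nonneg (by linarith) (by positivity))
    (sqrt_sq_sub_sq_div_nonneg (halfWidth_sq_le hN) x)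

lemma integrable_binaryDensity (hN : 1 < N) : Integrable (binaryDensity N) := by
  have hc := Real.sq_sqrt (show 0 ≤ N by linarith)
  have h := integrable_sqrt_sq_sub_sq_div (halfWidth_pos hN) (Real.sqrt_pos.2 (by linarith))
    (halfWidth_sq_add_sq hN.le)
  rw [hc] at h
  rw [funext (binaryDensity_eq hN.le)]
  exact h.const_mul _

theorem integral_binaryDensity (hN : 2 ≤ N) : ∫ x, binaryDensity N x = 1 := by
  have hN0 : 0 < N := by linarith
  have hc := Real.sq_sqrt hN0.le
  have h := integral_sqrt_sq_sub_sq_div (halfWidth_pos (by linarith)) (by positivity)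
    (Real.sqrt_pos.2 hN0) (halfWidth_sq_add_sq (by linarith))
  rw [hc] at h
  rw [funext (binaryDensity_eq (by linarith)), integral_const_mul, h, div_div, ← sq, hc]
  field_simp
  ring

end BinaryDensity

section Convergence

lemma semicircleDensity_nonneg (x : ℝ) : 0 ≤ semicircleDensity x := by
  unfold semicircleDensity
  positivity

lemma integrable_semicircleDensity : Integrable semicircleDensity := by
  have hcont : Continuous semicircleDensity := by
    unfold semicircleDensity
    fun_prop
  refine hcont.integrable_of_hasCompactSupport
    (HasCompactSupport.intro (isCompact_Icc (a := -2) (b := 2)) fun x hx => ?_)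
  rw [mem_Icc, not_and_or, not_le, not_le] at hx
  rw [semicircleDensity, Real.sqrt_eq_zero_of_nonpos (by rcases hx with hx | hx <;> nlinarith),
    zero_div]

lemma binaryDensity_le {N : ℝ} (hN : 6 ≤ N) (x : ℝ) :
    binaryDensity N x ≤ 3 * semicircleDensity x := by
  have ha : halfWidth N ^ 2 ≤ 4 := by
    rw [halfWidth_sq (by linarith), sub_le_self_iff]
    positivity
  rw [binaryDensity_eq (by linarith)]
  rcases lt_or_ge (x ^ 2) (halfWidth N ^ 2) with hx | hx
  · have hNx : 0 < N - x ^ 2 := by linarith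
    have hratio : N / (N - x ^ 2) ≤ 3 := by
      rw [div_le_iff₀ hNx]
      linarith
    calc N / (2 * π) * (√(halfWidth N ^ 2 - x ^ 2) / (N - x ^ 2))
        = N / (N - x ^ 2) * (√(halfWidth N ^ 2 - x ^ 2) / (2 * π)) := by ring
      _ ≤ 3 * semicircleDensity x := by
        unfold semicircleDensity
        gcongr
  · rw [Real.sqrt_eq_zero_of_nonpos (by linarith), zero_div, mul_zero]
    exact mul_nonneg (by norm_num) (semicircleDensity_nonneg x)

lemma tendsto_binaryDensity (x : ℝ) :
    Tendsto (fun n : ℕ => binaryDensity n x) atTop (𝓝 (semicircleDensity x)) := by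
  have h := (((tendsto_halfWidth.pow 2).sub_const (x ^ 2)).sqrt.div_const (2 * π)).mul
    (tendsto_natCast_div_add_atTop (-x ^ 2))
  rw [show (2 : ℝ) ^ 2 = 4 by norm_num, mul_one] at h
  refine h.congr' ?_
  filter_upwards [eventually_ge_atTop 1] with n hn
  rw [binaryDensity_eq (by exact_mod_cast hn)]
  ring

theorem tendsto_integral_binaryDensity_smul {E : Type*} [NormedAddCommGroup E] [NormedSpace ℝ E]
    (f : BoundedContinuousFunction ℝ E) :
    Tendsto (fun n : ℕ => ∫ x, binaryDensity n x • f x) atTop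
      (𝓝 (∫ x, semicircleDensity x • f x)) := by
  refine tendsto_integral_filter_of_dominated_convergence (fun x => 3 * ‖f‖ * semicircleDensity x)
    ?_ ?_ (integrable_semicircleDensity.const_mul _) (ae_of_all _ fun x =>
      (tendsto_binaryDensity x).smul_const (f x))
  · filter_upwards [eventually_ge_atTop 2] with n hn
    exact (integrable_binaryDensity (by exact_mod_cast hn)).aestronglyMeasurable.smul
      f.continuous.aestronglyMeasurable
  · filter_upwards [eventually_ge_atTop 6] with n hn
    refine ae_of_all _ fun x => ?_
    have hn6 : (6 : ℝ) ≤ n := by exact_mod_cast hn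
    rw [norm_smul, Real.norm_of_nonneg (binaryDensity_nonneg (by linarith) x)]
    calc binaryDensity n x * ‖f x‖ ≤ 3 * semicircleDensity x * ‖f‖ :=
          mul_le_mul (binaryDensity_le hn6 x) (f.norm_coe_le_norm x) (norm_nonneg _)
            (mul_nonneg (by norm_num) (semicircleDensity_nonneg x))
      _ = 3 * ‖f‖ * semicircleDensity x := by ring

end Convergence

/-- **Free central limit theorem, binary case.** For `n ≥ 2` let `μ_n` be the measure with
density `p_n(x) = (1/(2π))·√(4n²−4n−n²x²)/(n−x²)` for `|x| < 2√(1−1/n)` and `0` elsewhere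
(the distribution of the normalized free additive convolution of `n` symmetric binary
measures).  Then each `μ_n` is a probability measure and `μ_n` converges weakly to the
semicircle law as `n → ∞`. -/
theorem binary_free_clt
    (μ : ℕ → Measure ℝ)
    (hμ : ∀ n : ℕ, μ n = volume.withDensity fun x =>
      ENNReal.ofReal
        (if |x| < 2 * Real.sqrt (1 - 1 / (n : ℝ)) then
          (1 / (2 * Real.pi)) * Real.sqrt (4 * (n : ℝ) ^ 2 - 4 * n - n ^ 2 * x ^ 2)
            / ((n : ℝ) - x ^ 2)
        else 0)) :
    (∀ n : ℕ, 2 ≤ n → IsProbabilityMeasure (μ n)) ∧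
    (∀ f : BoundedContinuousFunction ℝ ℝ,
      Tendsto (fun n => ∫ x, f x ∂(μ n)) atTop (𝓝 (∫ x, f x ∂semicircleLaw))) := by
  have hμ' : ∀ n : ℕ, μ n = volume.withDensity fun x => ENNReal.ofReal (binaryDensity n x) := hμ
  have hsc : semicircleLaw = volume.withDensity fun x => ENNReal.ofReal (semicircleDensity x) := rfl
  refine ⟨fun n hn => ?_, fun f => ?_⟩
  · have hn' : (2 : ℝ) ≤ n := by exact_mod_cast hn
    rw [hμ']
    exact isProbabilityMeasure_withDensity_ofReal (integrable_binaryDensity (by linarith))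
      (ae_of_all _ (binaryDensity_nonneg (by linarith))) (integral_binaryDensity hn')
  · rw [hsc, integral_withDensity_ofReal integrable_semicircleDensity.aemeasurable
      (ae_of_all _ semicircleDensity_nonneg)]
    refine (tendsto_integral_binaryDensity_smul f).congr' ?_
    filter_upwards [eventually_ge_atTop 2] with n hn
    have hn' : (2 : ℝ) ≤ n := by exact_mod_cast hn
    rw [hμ', integral_withDensity_ofReal (integrable_binaryDensity (by linarith)).aemeasurable
      (ae_of_all _ (binaryDensity_nonneg (by linarith)))]
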